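/- arXiv:1811.10378 — 2 statements merged into one kernel-verified Lean document; each statement's English description precedes it below -/
import Mathlib

section
/- With the iteration of Algorithm 3.1, if the Sylvester tensor equation A *_M X + X *_N C = D is consistent, and R^(k) ≠ 0, then P^(k) ≠ 0 (so the iteration never breaks down before finding a solution). -/
open scoped BigOperators

/-- Multi-index of shape `I₁ × ⋯ × I_M`. -/
abbrev MIdx {M : ℕ} (I : Fin M → ℕ) := (k : Fin M) → Fin (I k)

/-- Einstein product: contraction over the shared (middle) index group. -/
def eprod {α β γ : Type*} [Fintype β] (A : α → β → ℝ) (B : β → γ → ℝ) :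
    α → γ → ℝ := fun a c => ∑ b, A a b * B b c

/-- Generalized trace of a square tensor. -/
def ttrace {α : Type*} [Fintype α] (A : α → α → ℝ) : ℝ := ∑ a, A a a

/-- Transpose: swaps the two index groups. -/
def ttr {α β : Type*} (A : α → β → ℝ) : β → α → ℝ := fun b a => A a b

/-- Frobenius inner product ⟨X, Y⟩ = tr(Yᵀ * X). -/
noncomputable def frobInner {α β : Type*} [Fintype α] [Fintype β]
    (X Y : α → β → ℝ) : ℝ := ttrace (eprod (ttr Y) X)

/-- Frobenius norm of a tensor. -/
noncomputable def tnorm {α β : Type*} [Fintype α] [Fintype β]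
    (X : α → β → ℝ) : ℝ := Real.sqrt (frobInner X X)

/-- Kronecker product of tensors (blockwise). -/
def kron {α β γ δ : Type*} (A : α → β → ℝ) (B : γ → δ → ℝ) :
    α × γ → β × δ → ℝ := fun p q => A p.1 q.1 * B p.2 q.2

/-- Vec: lines up the row-group slices into a single column index. -/
def tVec {α β : Type*} (X : α → β → ℝ) : β × α → ℝ := fun p => X p.2 p.1

/-- Einstein product of a tensor with a vectorized tensor. -/
def evec {α β : Type*} [Fintype β] (A : α → β → ℝ) (x : β → ℝ) : α → ℝ :=
  fun a => ∑ b, A a b * x b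

section helpers
variable {α β : Type*} [Fintype α] [Fintype β]

lemma frobInner_def (X Y : α → β → ℝ) :
    frobInner X Y = ∑ b, ∑ a, X a b * Y a b := by
  simp [frobInner, ttrace, eprod, ttr, mul_comm]

lemma frobInner_self_ne_zero {X : α → β → ℝ} (h : X ≠ 0) :
    frobInner X X ≠ 0 := by
  intro h0
  apply h
  rw [frobInner_def] at h0
  funext a b
  have h1 := (Finset.sum_eq_zero_iff_of_nonneg
      (fun b _ => Finset.sum_nonneg fun a _ => mul_self_nonneg (X a b))).mp h0 b
      (Finset.mem_univ b)
  have h2 := (Finset.sum_eq_zero_iff_of_nonneg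
      (fun a _ => mul_self_nonneg (X a b))).mp h1 a (Finset.mem_univ a)
  exact mul_self_eq_zero.mp h2

lemma frobInner_zero_right (X : α → β → ℝ) : frobInner X (0 : α → β → ℝ) = 0 := by
  simp [frobInner_def]

lemma frobInner_add_left (X Y Z : α → β → ℝ) :
    frobInner (X + Y) Z = frobInner X Z + frobInner Y Z := by
  simp [frobInner_def, add_mul, Finset.sum_add_distrib]

lemma frobInner_sub_left (X Y Z : α → β → ℝ) :
    frobInner (X - Y) Z = frobInner X Z - frobInner Y Z := by
  simp [frobInner_def, sub_mul, Finset.sum_sub_distrib]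

lemma frobInner_add_right (X Y Z : α → β → ℝ) :
    frobInner X (Y + Z) = frobInner X Y + frobInner X Z := by
  simp [frobInner_def, mul_add, Finset.sum_add_distrib]

lemma frobInner_smul_left (c : ℝ) (X Y : α → β → ℝ) :
    frobInner (c • X) Y = c * frobInner X Y := by
  simp [frobInner_def, Finset.mul_sum, mul_assoc]

lemma frobInner_smul_right (c : ℝ) (X Y : α → β → ℝ) :
    frobInner X (c • Y) = c * frobInner X Y := by
  simp [frobInner_def, Finset.mul_sum, mul_left_comm]

lemma frobInner_adjA (A : α → α → ℝ) (E R : α → β → ℝ) :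
    frobInner E (eprod (ttr A) R) = frobInner (eprod A E) R := by
  simp only [frobInner_def, eprod, ttr, Finset.mul_sum, Finset.sum_mul]
  refine Finset.sum_congr rfl fun b _ => ?_
  rw [Finset.sum_comm]
  exact Finset.sum_congr rfl fun a' _ => Finset.sum_congr rfl fun a _ => by ring

lemma frobInner_adjC (C : β → β → ℝ) (E R : α → β → ℝ) :
    frobInner E (eprod R (ttr C)) = frobInner (eprod E C) R := by
  simp only [frobInner_def, eprod, ttr, Finset.mul_sum, Finset.sum_mul]
  rw [Finset.sum_comm (f := fun b a => ∑ b', E a b * (R a b' * C b b'))]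
  conv_rhs => rw [Finset.sum_comm]
  refine Finset.sum_congr rfl fun a _ => ?_
  rw [Finset.sum_comm]
  exact Finset.sum_congr rfl fun b' _ => Finset.sum_congr rfl fun b _ => by ring

lemma eprod_sub_right (A : α → α → ℝ) (X Y : α → β → ℝ) :
    eprod A (X - Y) = eprod A X - eprod A Y := by
  funext a c
  simp [eprod, mul_sub, Finset.sum_sub_distrib]

lemma eprod_sub_left (C : β → β → ℝ) (X Y : α → β → ℝ) :
    eprod (X - Y) C = eprod X C - eprod Y C := by
  funext a c
  simp [eprod, sub_mul, Finset.sum_sub_distrib]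

end helpers

/-- Identity tensor. -/

theorem descent_identity {M N : ℕ} {I : Fin M → ℕ} {J : Fin N → ℕ}
    (A : MIdx I → MIdx I → ℝ) (C : MIdx J → MIdx J → ℝ)
    (D : MIdx I → MIdx J → ℝ)
    (X R P : ℕ → MIdx I → MIdx J → ℝ)
    (hR : ∀ k, 1 ≤ k → R k = D - (eprod A (X k) + eprod (X k) C))
    (hP1 : P 1 = eprod (ttr A) (R 1) + eprod (R 1) (ttr C))
    (hX : ∀ k, 1 ≤ k →
      X (k + 1) = X k + (frobInner (R k) (R k) / frobInner (P k) (P k)) • P k)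
    (hP : ∀ k, 1 ≤ k →
      P (k + 1) = eprod (ttr A) (R (k + 1)) + eprod (R (k + 1)) (ttr C)
        + (frobInner (R (k + 1)) (R (k + 1)) / frobInner (R k) (R k)) • P k)
    (Xs : MIdx I → MIdx J → ℝ) (hXs : eprod A Xs + eprod Xs C = D) :
    ∀ k, 1 ≤ k → (∀ j, 1 ≤ j → j < k → P j ≠ 0) →
      frobInner (Xs - X k) (P k) = frobInner (R k) (R k) := by
  have hLerr : ∀ m, 1 ≤ m →
      eprod A (Xs - X m) + eprod (Xs - X m) C = R m := by
    intro m hm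
    rw [eprod_sub_right, eprod_sub_left, hR m hm, ← hXs]
    abel
  intro k hk
  induction k, hk using Nat.le_induction with
  | base =>
    intro _
    rw [hP1, frobInner_add_right, frobInner_adjA, frobInner_adjC,
      ← frobInner_add_left, hLerr 1 le_rfl]
  | succ n hn ih =>
    intro hyp
    have hPn : P n ≠ 0 := hyp n hn (Nat.lt_succ_self n)
    have ihv := ih (fun j hj hjn => hyp j hj (hjn.trans (Nat.lt_succ_self n)))
    have hdiff : Xs - X (n + 1) =
        (Xs - X n) - (frobInner (R n) (R n) / frobInner (P n) (P n)) • P n := by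
      rw [hX n hn]; abel
    have e2 : frobInner (Xs - X (n + 1)) (P n) = 0 := by
      rw [hdiff, frobInner_sub_left, ihv, frobInner_smul_left,
        div_mul_cancel₀ _ (frobInner_self_ne_zero hPn), sub_self]
    rw [hP n hn, frobInner_add_right, frobInner_add_right, frobInner_smul_right,
      e2, mul_zero, add_zero, frobInner_adjA, frobInner_adjC,
      ← frobInner_add_left, hLerr (n + 1) (by omega)]

def idT {α : Type*} [DecidableEq α] : α → α → ℝ := fun a b => if a = b then 1 else 0
theorem algorithm_no_breakdown {M N : ℕ} (I : Fin M → ℕ) (J : Fin N → ℕ)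
(A : MIdx I → MIdx I → ℝ) (C : MIdx J → MIdx J → ℝ)
    (D : MIdx I → MIdx J → ℝ)
    (X R P : ℕ → MIdx I → MIdx J → ℝ)
    (hR : ∀ k, 1 ≤ k → R k = D - (eprod A (X k) + eprod (X k) C))
    (hP1 : P 1 = eprod (ttr A) (R 1) + eprod (R 1) (ttr C))
    (hX : ∀ k, 1 ≤ k →
      X (k + 1) = X k + (frobInner (R k) (R k) / frobInner (P k) (P k)) • P k)
    (hP : ∀ k, 1 ≤ k →
      P (k + 1) = eprod (ttr A) (R (k + 1)) + eprod (R (k + 1)) (ttr C)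
        + (frobInner (R (k + 1)) (R (k + 1)) / frobInner (R k) (R k)) • P k)
    (hcons : ∃ Xs : MIdx I → MIdx J → ℝ, eprod A Xs + eprod Xs C = D) :
    ∀ k, 1 ≤ k → (∀ j, 1 ≤ j → j < k → R j ≠ 0 ∧ P j ≠ 0) →
      R k ≠ 0 → P k ≠ 0 := by
  obtain ⟨Xs, hXs⟩ := hcons
  intro k hk hprev hRk hPk
  have key := descent_identity A C D X R P hR hP1 hX hP Xs hXs k hk
    (fun j hj hjk => (hprev j hj hjk).2)
  rw [hPk, frobInner_zero_right] at key
  exact frobInner_self_ne_zero hRk key.symm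
end

section
/- The Sylvester tensor equation A *_M X + X *_N C = D is inconsistent if and only if there exists an iteration index k₀ in Algorithm 3.1 such that R^(k₀) ≠ 0 and P^(k₀) = 0. -/
open scoped BigOperators

/-!
Algorithm 3.1 is Craig's method (conjugate gradients on `L Lᵀ y = D`, `X = Lᵀ y`) for the linear
map `L X = A *_M X + X *_N C`, which becomes an operator on a Euclidean space once tensors are
flattened. If `L X̃ = D`, the error `X̃ - X_k` has inner product `‖R_k‖²` with `P_k`, so `P_k = 0`
forces `R_k = 0`. If `L X = D` has no solution, no residual vanishes; if moreover no direction
vanished, the residuals would form an infinite family of nonzero, pairwise orthogonal vectors in a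
finite-dimensional space.
-/

open scoped RealInnerProductSpace Matrix

section CGNE

variable {E F : Type*} [NormedAddCommGroup E] [InnerProductSpace ℝ E]
  [NormedAddCommGroup F] [InnerProductSpace ℝ F]

/-- Craig's method for `L x = d`, with `L'` in the role of the adjoint of `L`, indexed from `1`
as in Algorithm 3.1. -/
structure IsCGNEIteration (L : E →ₗ[ℝ] F) (L' : F →ₗ[ℝ] E) (d : F) (x p : ℕ → E) (r : ℕ → F) :
    Prop where
  residual_eq : ∀ k, 1 ≤ k → r k = d - L (x k)
  direction_one : p 1 = L' (r 1)
  iterate_succ : ∀ k, 1 ≤ k → x (k + 1) = x k + (⟪r k, r k⟫ / ⟪p k, p k⟫) • p k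
  direction_succ : ∀ k, 1 ≤ k →
    p (k + 1) = L' (r (k + 1)) + (⟪r (k + 1), r (k + 1)⟫ / ⟪r k, r k⟫) • p k

theorem exists_eq_zero_of_pairwise_inner_eq_zero [FiniteDimensional ℝ F] {ι : Type*} [Infinite ι]
    {v : ι → F} (hv : Pairwise fun i j => ⟪v i, v j⟫ = 0) : ∃ i, v i = 0 := by
  by_contra! hne
  exact Module.Finite.not_linearIndependent_of_infinite v
    (linearIndependent_of_ne_zero_of_inner_eq_zero hne hv)

namespace IsCGNEIteration

variable {L : E →ₗ[ℝ] F} {L' : F →ₗ[ℝ] E} {d : F} {x p : ℕ → E} {r : ℕ → F}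

theorem residual_succ (h : IsCGNEIteration L L' d x p r) {k : ℕ} (hk : 1 ≤ k) :
    r (k + 1) = r k - (⟪r k, r k⟫ / ⟪p k, p k⟫) • L (p k) := by
  rw [h.residual_eq _ (by omega), h.iterate_succ k hk, h.residual_eq k hk, map_add, map_smul]
  abel

theorem exists_apply_eq_of_residual_eq_zero (h : IsCGNEIteration L L' d x p r) {k : ℕ}
    (hk : 1 ≤ k) (hr : r k = 0) : ∃ x₀, L x₀ = d :=
  ⟨x k, (sub_eq_zero.mp ((h.residual_eq k hk).symm.trans hr)).symm⟩

theorem inner_sub_iterate_direction (h : IsCGNEIteration L L' d x p r)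
    (hL : ∀ u v, ⟪L u, v⟫ = ⟪u, L' v⟫) {x₀ : E} (hx₀ : L x₀ = d) {k : ℕ} (hk : 1 ≤ k) :
    ⟪x₀ - x k, p k⟫ = ⟪r k, r k⟫ := by
  have hres : ∀ k, 1 ≤ k → L (x₀ - x k) = r k := fun k hk => by
    rw [map_sub, hx₀, h.residual_eq k hk]
  induction k, hk using Nat.le_induction with
  | base => rw [h.direction_one, ← hL, hres 1 le_rfl]
  | succ k hk ih =>
    have hperp : ⟪x₀ - x (k + 1), p k⟫ = 0 := by
      rw [h.iterate_succ k hk, sub_add_eq_sub_sub, inner_sub_left, real_inner_smul_left, ih,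
        div_mul_cancel_of_imp fun hp => by rw [← ih, inner_self_eq_zero.mp hp, inner_zero_right],
        sub_self]
    rw [h.direction_succ k hk, inner_add_right, real_inner_smul_right, hperp, mul_zero, add_zero,
      ← hL, hres (k + 1) (by omega)]

theorem residual_eq_zero_of_direction_eq_zero (h : IsCGNEIteration L L' d x p r)
    (hL : ∀ u v, ⟪L u, v⟫ = ⟪u, L' v⟫) {x₀ : E} (hx₀ : L x₀ = d) {k : ℕ} (hk : 1 ≤ k)
    (hp : p k = 0) : r k = 0 := by
  have := h.inner_sub_iterate_direction hL hx₀ hk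
  rwa [hp, inner_zero_right, eq_comm, inner_self_eq_zero] at this

theorem inner_adjoint_residual (h : IsCGNEIteration L L' d x p r) {i : ℕ} (hi : 1 ≤ i) {q : E}
    (hq : 2 ≤ i → ⟪p (i - 1), q⟫ = 0) : ⟪L' (r i), q⟫ = ⟪p i, q⟫ := by
  obtain rfl | ⟨m, hm, rfl⟩ : i = 1 ∨ ∃ m, 1 ≤ m ∧ i = m + 1 :=
    (eq_or_lt_of_le hi).imp Eq.symm fun hlt => ⟨i - 1, by omega, by omega⟩
  · rw [h.direction_one]
  · have hq' : ⟪p m, q⟫ = 0 := hq (by omega)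
    rw [h.direction_succ m hm, inner_add_left, real_inner_smul_left, hq', mul_zero, add_zero]

theorem inner_residual_succ_eq_zero (h : IsCGNEIteration L L' d x p r)
    (hL : ∀ u v, ⟪L u, v⟫ = ⟪u, L' v⟫) {n : ℕ} (hn : 1 ≤ n) (hpn : p n ≠ 0)
    (hrr : ∀ i, 1 ≤ i → i < n → ⟪r i, r n⟫ = 0) (hpp : ∀ i, 1 ≤ i → i < n → ⟪p i, p n⟫ = 0)
    {i : ℕ} (hi : 1 ≤ i) (hin : i ≤ n) : ⟪r i, r (n + 1)⟫ = 0 := by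
  have hadj : ⟪r i, L (p n)⟫ = ⟪p i, p n⟫ := by
    rw [real_inner_comm, hL, real_inner_comm,
      h.inner_adjoint_residual hi fun _ => hpp (i - 1) (by omega) (by omega)]
  rw [h.residual_succ hn, inner_sub_right, real_inner_smul_right, hadj]
  rcases hin.lt_or_eq with hlt | rfl
  · rw [hrr i hi hlt, hpp i hi hlt, mul_zero, sub_zero]
  · rw [div_mul_cancel₀ _ (inner_self_ne_zero.mpr hpn), sub_self]

theorem inner_direction_succ_eq_zero (h : IsCGNEIteration L L' d x p r)
    (hL : ∀ u v, ⟪L u, v⟫ = ⟪u, L' v⟫) (hr : ∀ k, 1 ≤ k → r k ≠ 0) (hp : ∀ k, 1 ≤ k → p k ≠ 0)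
    {n : ℕ} (hn : 1 ≤ n) (hpp : ∀ i, 1 ≤ i → i < n → ⟪p i, p n⟫ = 0)
    (hrr : ∀ i, 1 ≤ i → i ≤ n → ⟪r i, r (n + 1)⟫ = 0)
    {i : ℕ} (hi : 1 ≤ i) (hin : i ≤ n) : ⟪p i, p (n + 1)⟫ = 0 := by
  have hri : ⟪r i, r i⟫ ≠ 0 := inner_self_ne_zero.mpr (hr i hi)
  have hpi : ⟪p i, p i⟫ ≠ 0 := inner_self_ne_zero.mpr (hp i hi)
  set a := ⟪r i, r i⟫ / ⟪p i, p i⟫ with ha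
  have ha0 : a ≠ 0 := div_ne_zero hri hpi
  have hLp : a • L (p i) = r i - r (i + 1) := by rw [h.residual_succ hi, sub_sub_cancel]
  have key : a * ⟪p i, p (n + 1)⟫ = ⟪r i, r (n + 1)⟫ - ⟪r (i + 1), r (n + 1)⟫
      + a * (⟪r (n + 1), r (n + 1)⟫ / ⟪r n, r n⟫) * ⟪p i, p n⟫ := by
    rw [h.direction_succ n hn, inner_add_right, real_inner_smul_right, ← hL, mul_add,
      ← real_inner_smul_left, hLp, inner_sub_left, mul_assoc]
  refine (mul_eq_zero.mp ?_).resolve_left ha0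
  rcases hin.lt_or_eq with hlt | rfl
  · rw [key, hrr i hi hin, hrr (i + 1) (by omega) hlt, hpp i hi hlt]
    ring
  · rw [key, hrr i hi le_rfl, ha]
    field_simp
    ring

theorem inner_eq_zero_of_lt (h : IsCGNEIteration L L' d x p r)
    (hL : ∀ u v, ⟪L u, v⟫ = ⟪u, L' v⟫) (hr : ∀ k, 1 ≤ k → r k ≠ 0) (hp : ∀ k, 1 ≤ k → p k ≠ 0) :
    ∀ {i j : ℕ}, 1 ≤ i → i < j → ⟪r i, r j⟫ = 0 ∧ ⟪p i, p j⟫ = 0 := by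
  intro i j
  induction j generalizing i with
  | zero => omega
  | succ n ih =>
    intro hi hin
    have hn : 1 ≤ n := by omega
    have hrr : ∀ i, 1 ≤ i → i ≤ n → ⟪r i, r (n + 1)⟫ = 0 := fun i hi hin =>
      h.inner_residual_succ_eq_zero hL hn (hp n hn) (fun i hi hlt => (ih hi hlt).1)
        (fun i hi hlt => (ih hi hlt).2) hi hin
    exact ⟨hrr i hi (by omega), h.inner_direction_succ_eq_zero hL hr hp hn
      (fun i hi hlt => (ih hi hlt).2) hrr hi (by omega)⟩

theorem not_exists_apply_eq_iff [FiniteDimensional ℝ F] (h : IsCGNEIteration L L' d x p r)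
    (hL : ∀ u v, ⟪L u, v⟫ = ⟪u, L' v⟫) :
    (¬ ∃ x₀, L x₀ = d) ↔ ∃ k, 1 ≤ k ∧ r k ≠ 0 ∧ p k = 0 := by
  constructor
  · intro hinc
    have hr : ∀ k, 1 ≤ k → r k ≠ 0 := fun k hk hrk =>
      hinc (h.exists_apply_eq_of_residual_eq_zero hk hrk)
    by_contra! hp
    have hlt : ∀ {i j : ℕ}, i < j → ⟪r (i + 1), r (j + 1)⟫ = 0 := fun hij =>
      (h.inner_eq_zero_of_lt hL hr (fun k hk => hp k hk (hr k hk)) (by omega) (by omega)).1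
    have hortho : Pairwise fun i j => ⟪r (i + 1), r (j + 1)⟫ = 0 := fun i j hij =>
      hij.lt_or_gt.elim hlt fun hji => (real_inner_comm _ _).trans (hlt hji)
    obtain ⟨n, hn⟩ := exists_eq_zero_of_pairwise_inner_eq_zero hortho
    exact hr (n + 1) (by omega) hn
  · rintro ⟨k, hk, hrk, hpk⟩ ⟨x₀, hx₀⟩
    exact hrk (h.residual_eq_zero_of_direction_eq_zero hL hx₀ hk hpk)

end IsCGNEIteration

end CGNE

section Tensor

variable {α β : Type*} [Fintype α] [Fintype β]

def tensorToL2 : (α → β → ℝ) ≃ₗ[ℝ] EuclideanSpace ℝ (α × β) :=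
  (LinearEquiv.curry ℝ ℝ α β).symm.trans (WithLp.linearEquiv 2 ℝ (α × β → ℝ)).symm

theorem inner_tensorToL2 (X Y : α → β → ℝ) : ⟪tensorToL2 X, tensorToL2 Y⟫ = frobInner X Y := by
  rw [PiLp.inner_apply, Fintype.sum_prod_type, Finset.sum_comm]
  simp only [RCLike.inner_apply, conj_trivial]
  rfl

def sylvesterMap (A : α → α → ℝ) (C : β → β → ℝ) : Module.End ℝ (α → β → ℝ) :=
  mulLeftLinearMap β ℝ (Matrix.of A) + mulRightLinearMap α ℝ (Matrix.of C)

@[simp]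
theorem sylvesterMap_apply (A : α → α → ℝ) (C : β → β → ℝ) (X : α → β → ℝ) :
    sylvesterMap A C X = eprod A X + eprod X C :=
  rfl

theorem frobInner_sylvesterMap (A : α → α → ℝ) (C : β → β → ℝ) (X Y : α → β → ℝ) :
    frobInner (sylvesterMap A C X) Y = frobInner X (sylvesterMap (ttr A) (ttr C) Y) := by
  change Matrix.trace ((Matrix.of Y)ᵀ * (Matrix.of A * Matrix.of X + Matrix.of X * Matrix.of C))
    = Matrix.trace (((Matrix.of A)ᵀ * Matrix.of Y + Matrix.of Y * (Matrix.of C)ᵀ)ᵀ * Matrix.of X)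
  rw [Matrix.transpose_add, Matrix.transpose_mul, Matrix.transpose_mul, Matrix.transpose_transpose,
    Matrix.transpose_transpose, Matrix.mul_add, Matrix.add_mul, Matrix.trace_add, Matrix.trace_add,
    Matrix.mul_assoc, Matrix.trace_mul_cycle, Matrix.trace_mul_comm (Matrix.of X * Matrix.of C)]

theorem tensorToL2_conj_sylvesterMap (A : α → α → ℝ) (C : β → β → ℝ) (X : α → β → ℝ) :
    tensorToL2.conj (sylvesterMap A C) (tensorToL2 X) = tensorToL2 (eprod A X + eprod X C) := by
  rw [LinearEquiv.conj_apply_apply, LinearEquiv.symm_apply_apply, sylvesterMap_apply]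

theorem inner_conj_sylvesterMap (A : α → α → ℝ) (C : β → β → ℝ)
    (u v : EuclideanSpace ℝ (α × β)) :
    ⟪tensorToL2.conj (sylvesterMap A C) u, v⟫
      = ⟪u, tensorToL2.conj (sylvesterMap (ttr A) (ttr C)) v⟫ := by
  obtain ⟨X, rfl⟩ := tensorToL2.surjective u
  obtain ⟨Y, rfl⟩ := tensorToL2.surjective v
  simp only [LinearEquiv.conj_apply_apply, LinearEquiv.symm_apply_apply, inner_tensorToL2]
  exact frobInner_sylvesterMap A C X Y

end Tensor

theorem inconsistency_criterion {M N : ℕ} (I : Fin M → ℕ) (J : Fin N → ℕ)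
(A : MIdx I → MIdx I → ℝ) (C : MIdx J → MIdx J → ℝ)
    (D : MIdx I → MIdx J → ℝ)
    (X R P : ℕ → MIdx I → MIdx J → ℝ)
    (hR : ∀ k, 1 ≤ k → R k = D - (eprod A (X k) + eprod (X k) C))
    (hP1 : P 1 = eprod (ttr A) (R 1) + eprod (R 1) (ttr C))
    (hX : ∀ k, 1 ≤ k →
      X (k + 1) = X k + (frobInner (R k) (R k) / frobInner (P k) (P k)) • P k)
    (hP : ∀ k, 1 ≤ k →
      P (k + 1) = eprod (ttr A) (R (k + 1)) + eprod (R (k + 1)) (ttr C)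
        + (frobInner (R (k + 1)) (R (k + 1)) / frobInner (R k) (R k)) • P k) :
    (¬ ∃ Xs : MIdx I → MIdx J → ℝ, eprod A Xs + eprod Xs C = D) ↔
      ∃ k, 1 ≤ k ∧ R k ≠ 0 ∧ P k = 0 := by
  have hS : IsCGNEIteration (tensorToL2.conj (sylvesterMap A C))
      (tensorToL2.conj (sylvesterMap (ttr A) (ttr C))) (tensorToL2 D)
      (tensorToL2 ∘ X) (tensorToL2 ∘ P) (tensorToL2 ∘ R) := by
    refine ⟨fun k hk => ?_, ?_, fun k hk => ?_, fun k hk => ?_⟩ <;>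
      simp only [Function.comp_apply, tensorToL2_conj_sylvesterMap, inner_tensorToL2, ← map_sub,
        ← map_add, ← map_smul]
    exacts [congrArg _ (hR k hk), congrArg _ hP1, congrArg _ (hX k hk), congrArg _ (hP k hk)]
  have := hS.not_exists_apply_eq_iff (inner_conj_sylvesterMap A C)
  simpa only [tensorToL2.surjective.exists, tensorToL2_conj_sylvesterMap,
    tensorToL2.injective.eq_iff, Function.comp_apply, LinearEquiv.map_ne_zero_iff,
    LinearEquiv.map_eq_zero_iff] using this
end
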